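/- arXiv:2103.00469 — 2 statements merged into one kernel-verified Lean document; each statement's English description precedes it below -/
import Mathlib

section
/- Let X be a random variable on a complete Riemannian manifold M with E[d(X,p)²] < ∞ for some p. Then the set of minimizers argmin_{p∈M} E[d(X,p)²] is nonempty and compact. -/
/-!
A Fréchet function `F` is continuous (dominated convergence) and coercive: integrating
`d(p, q)² ≤ 2 d(p, X)² + 2 d(X, q)²` gives `d(p, q)² ≤ 2 (F p + F q)`, so `F p > F p₀` outside
the closed ball of radius `2 √(F p₀)` about `p₀`. A continuous function which beats its value at
`p₀` outside a compact set attains its minimum, and its minimizers form a closed subset of that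
compact set.
-/

open MeasureTheory Metric

theorem nonempty_and_isCompact_setOf_forall_le {α β : Type*} [TopologicalSpace α] [LinearOrder β]
    [TopologicalSpace β] [OrderClosedTopology β] {f : α → β} (hf : Continuous f) {K : Set α}
    (hK : IsCompact K) {x₀ : α} (hlt : ∀ x ∉ K, f x₀ < f x) :
    {x | ∀ y, f x ≤ f y}.Nonempty ∧ IsCompact {x | ∀ y, f x ≤ f y} := by
  have hx₀ : x₀ ∈ K := by_contra fun h => lt_irrefl _ (hlt x₀ h)
  have hsub : {x | ∀ y, f x ≤ f y} ⊆ K := fun x hx => by_contra fun h => (hlt x h).not_ge (hx x₀)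
  obtain ⟨m, -, hmin⟩ := hK.exists_isMinOn ⟨x₀, hx₀⟩ hf.continuousOn
  refine ⟨⟨m, fun y => ?_⟩, hK.of_isClosed_subset ?_ hsub⟩
  · by_cases hy : y ∈ K
    · exact hmin hy
    · exact (hmin hx₀).trans (hlt y hy).le
  · simpa only [Set.ofPred_forall] using isClosed_iInter fun y => isClosed_le hf continuous_const

theorem sq_dist_le_two_mul_add {M : Type*} [PseudoMetricSpace M] (x y z : M) :
    dist x z ^ 2 ≤ 2 * (dist x y ^ 2 + dist y z ^ 2) :=
  (pow_le_pow_left₀ dist_nonneg (dist_triangle x y z) 2).trans add_sq_le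

section FrechetFunction

variable {Ω M : Type*} [MeasurableSpace Ω] {P : Measure Ω} [PseudoMetricSpace M] {X : Ω → M}

variable (P X) in
noncomputable def frechetFunction (p : M) : ℝ :=
  ∫ ω, dist (X ω) p ^ 2 ∂P

theorem frechetFunction_nonneg (p : M) : 0 ≤ frechetFunction P X p :=
  integral_nonneg fun _ => sq_nonneg _

variable [MeasurableSpace M] [OpensMeasurableSpace M]

theorem aestronglyMeasurable_sq_dist (hX : AEMeasurable X P) (p : M) :
    AEStronglyMeasurable (fun ω => dist (X ω) p ^ 2) P :=
  (((continuous_id.dist continuous_const).pow 2).measurable.comp_aemeasurable hX).aestronglyMeasurable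

variable [IsFiniteMeasure P]

theorem integrable_sq_dist_of_integrable {p₀ : M} (hX : AEMeasurable X P)
    (hfin : Integrable (fun ω => dist (X ω) p₀ ^ 2) P) (p : M) :
    Integrable (fun ω => dist (X ω) p ^ 2) P :=
  ((hfin.add (integrable_const (dist p₀ p ^ 2))).const_mul 2).mono'
    (aestronglyMeasurable_sq_dist hX p)
    (.of_forall fun ω => by
      rw [Real.norm_of_nonneg (sq_nonneg _)]
      exact sq_dist_le_two_mul_add _ _ _)

theorem continuous_frechetFunction {p₀ : M} (hX : AEMeasurable X P)
    (hfin : Integrable (fun ω => dist (X ω) p₀ ^ 2) P) : Continuous (frechetFunction P X) := by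
  refine continuous_iff_continuousAt.2 fun x₀ => continuousAt_of_dominated
    (bound := fun ω => 2 * (dist (X ω) x₀ ^ 2 + 1))
    (.of_forall (aestronglyMeasurable_sq_dist hX)) ?_
    (((integrable_sq_dist_of_integrable hX hfin x₀).add (integrable_const 1)).const_mul 2)
    (.of_forall fun ω => ((continuous_const.dist continuous_id).pow 2).continuousAt)
  filter_upwards [ball_mem_nhds x₀ one_pos] with x hx
  refine .of_forall fun ω => ?_
  have hx₀x : dist x₀ x ^ 2 ≤ 1 := by
    rw [mem_ball'] at hx
    nlinarith [dist_nonneg (x := x₀) (y := x)]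
  rw [Real.norm_of_nonneg (sq_nonneg _)]
  linarith [sq_dist_le_two_mul_add (X ω) x₀ x]

omit [IsFiniteMeasure P] in
theorem sq_dist_le_two_mul_frechetFunction_add [IsProbabilityMeasure P] {p₀ : M}
    (hX : AEMeasurable X P) (hfin : Integrable (fun ω => dist (X ω) p₀ ^ 2) P) (p q : M) :
    dist p q ^ 2 ≤ 2 * (frechetFunction P X p + frechetFunction P X q) := by
  have hint := integrable_sq_dist_of_integrable hX hfin
  calc dist p q ^ 2 = ∫ _, dist p q ^ 2 ∂P := by simp
    _ ≤ ∫ ω, 2 * (dist (X ω) p ^ 2 + dist (X ω) q ^ 2) ∂P :=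
      integral_mono (integrable_const _) (((hint p).add (hint q)).const_mul 2) fun ω => by
        simpa only [dist_comm p] using sq_dist_le_two_mul_add p (X ω) q
    _ = 2 * (frechetFunction P X p + frechetFunction P X q) := by
      rw [integral_const_mul, integral_add (hint p) (hint q)]
      rfl

omit [IsFiniteMeasure P] in
theorem frechetFunction_lt_of_notMem_closedBall [IsProbabilityMeasure P] {p₀ : M}
    (hX : AEMeasurable X P) (hfin : Integrable (fun ω => dist (X ω) p₀ ^ 2) P) {p : M}
    (hp : p ∉ closedBall p₀ (2 * √(frechetFunction P X p₀))) :
    frechetFunction P X p₀ < frechetFunction P X p := by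
  have hF₀ := frechetFunction_nonneg (P := P) (X := X) p₀
  have hfar : 4 * frechetFunction P X p₀ < dist p p₀ ^ 2 := by
    rw [mem_closedBall, not_le] at hp
    have hR : 0 ≤ 2 * √(frechetFunction P X p₀) := by positivity
    calc 4 * frechetFunction P X p₀ = (2 * √(frechetFunction P X p₀)) ^ 2 := by
          rw [mul_pow, Real.sq_sqrt hF₀]; norm_num
      _ < dist p p₀ ^ 2 := pow_lt_pow_left₀ hp hR two_ne_zero
  linarith [sq_dist_le_two_mul_frechetFunction_add hX hfin p p₀]

end FrechetFunction

theorem frechet_mean_set_nonempty_compact_general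
    {Ω : Type*} [MeasurableSpace Ω] (P : Measure Ω) [IsProbabilityMeasure P]
    {M : Type*} [MetricSpace M] [ProperSpace M]
    [MeasurableSpace M] [BorelSpace M]
    (X : Ω → M) (hX : Measurable X)
    (F : M → ℝ) (hF : ∀ p, F p = ∫ ω, dist (X ω) p ^ 2 ∂P)
    (p₀ : M) (hfin : Integrable (fun ω => dist (X ω) p₀ ^ 2) P) :
    {p : M | ∀ q, F p ≤ F q}.Nonempty ∧ IsCompact {p : M | ∀ q, F p ≤ F q} := by
  obtain rfl : F = frechetFunction P X := funext hF
  exact nonempty_and_isCompact_setOf_forall_le (continuous_frechetFunction hX.aemeasurable hfin)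
    (isCompact_closedBall p₀ _)
    fun _ hp => frechetFunction_lt_of_notMem_closedBall hX.aemeasurable hfin hp

/-- the set of Fréchet means (minimizers of `p ↦ E[d(X,p)²]`) of a
random variable `X` on a complete Riemannian manifold — abstracted as a complete
metric space in which closed bounded sets are compact (proper metric space, by
Hopf–Rinow) — is nonempty and compact, provided `E[d(X,p)²] < ∞` for some `p`. -/
theorem frechet_mean_set_nonempty_compact
    {Ω : Type*} [MeasurableSpace Ω] (P : Measure Ω) [IsProbabilityMeasure P]
    {M : Type*} [MetricSpace M] [Nonempty M] [ProperSpace M]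
    [MeasurableSpace M] [BorelSpace M]
    (X : Ω → M) (hX : Measurable X)
    (F : M → ℝ) (hF : ∀ p, F p = ∫ ω, dist (X ω) p ^ 2 ∂P)
    (p₀ : M) (hfin : Integrable (fun ω => dist (X ω) p₀ ^ 2) P) :
    {p : M | ∀ q, F p ≤ F q}.Nonempty ∧ IsCompact {p : M | ∀ q, F p ≤ F q} :=
  frechet_mean_set_nonempty_compact_general P X hX F hF p₀ hfin
end

section
/- On the 2-sphere S²_𝒦 of constant curvature 𝒦 > 0 with geodesic distance d_s, let μ̃ be a point, Ṽ a unit tangent vector at μ̃, and γ̃(t) = exp_{μ̃}(tṼ). For the measure ζ = (1−ε)δ_{μ̃} + (ε/2)(δ_{γ̃(t)} + δ_{γ̃(−t)}) with 0 < ε < 1 and 0 < t < π/√𝒦 satisfying t√𝒦·cot(t√𝒦) = −(1−ε)/(2ε), the point μ̃ is the unique minimizer of the Fréchet function F_ζ(q) = (ε/2)d_s²(q,γ̃(t)) + (ε/2)d_s²(q,γ̃(−t)) + (1−ε)d_s²(q,μ̃). -/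
/-!
Put `θ = t √K` and `c = √K d_s(q, μ)`. The cot condition says `(1 - ε) sin θ = -2εθ cos θ`,
so `θ > π/2`, and `F μ = ε θ² / K`. The normalised inner products of `q` with `γ(±t)` average to
`cos θ cos c`, so convexity of `arccos²` on `[-1, 1]` bounds the two `ε/2` terms of `F q` below by
`ε ψ² / K`, where `cos ψ = cos θ cos c`. Since `ψ ∈ [π - θ, θ]` and `sin ≥ sin θ` there,
`(θ² - ψ²) sin θ ≤ 2θ (cos ψ - cos θ) = 2θ (-cos θ)(1 - cos c) ≤ θ (-cos θ) c²`,
and the cot condition turns this into `ε (θ² - ψ²) ≤ (1 - ε) c² / 2 < (1 - ε) c²`.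
-/

open Real

noncomputable section

/-- Geodesic distance on the sphere of curvature `K > 0` (radius `1/√K`),
realized as `{x : ℝ³ | ‖x‖ = 1/√K}`: `d_s(x,y) = (1/√K)·arccos(K⟪x,y⟫)`. -/
def sphereDist (K : ℝ) (x y : EuclideanSpace ℝ (Fin 3)) : ℝ :=
  (1 / Real.sqrt K) * Real.arccos (K * inner ℝ x y)

/-- The unit-speed geodesic through `μ` in direction `V` on the sphere of
curvature `K` (with `‖μ‖ = 1/√K`, `‖V‖ = 1`, `⟪μ,V⟫ = 0`). -/
def sphereGeodesic (K : ℝ) (μ V : EuclideanSpace ℝ (Fin 3)) (t : ℝ) :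
    EuclideanSpace ℝ (Fin 3) :=
  Real.cos (t * Real.sqrt K) • μ + (Real.sin (t * Real.sqrt K) / Real.sqrt K) • V

open Set

namespace Real

lemma mul_cos_le_sin {x : ℝ} (hx₀ : 0 ≤ x) (hxπ : x ≤ π) : x * cos x ≤ sin x := by
  rcases lt_or_ge x (π / 2) with hx | hx
  · have hcos : 0 < cos x := cos_pos_of_mem_Ioo ⟨by linarith [pi_pos], hx⟩
    simpa [tan_eq_sin_div_cos, le_div_iff₀ hcos] using le_tan hx₀ hx
  · nlinarith [cos_nonpos_of_pi_div_two_le_of_le hx (by linarith [pi_pos]),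
      sin_nonneg_of_nonneg_of_le_pi hx₀ hxπ]

lemma monotoneOn_div_sin : MonotoneOn (fun x => x / sin x) (Ioo 0 π) := by
  have hsin : ∀ x ∈ Ioo 0 π, sin x ≠ 0 := fun x hx => (sin_pos_of_pos_of_lt_pi hx.1 hx.2).ne'
  have hderiv : ∀ x ∈ Ioo 0 π,
      HasDerivAt (fun x => x / sin x) ((1 * sin x - x * cos x) / sin x ^ 2) x :=
    fun x hx => (hasDerivAt_id x).div (hasDerivAt_sin x) (hsin x hx)
  refine monotoneOn_of_deriv_nonneg (convex_Ioo 0 π)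
    (continuousOn_id.div continuous_sin.continuousOn hsin) ?_ ?_ <;> rw [interior_Ioo]
  · exact fun x hx => (hderiv x hx).differentiableAt.differentiableWithinAt
  · intro x hx
    rw [(hderiv x hx).deriv]
    have := mul_cos_le_sin hx.1.le hx.2.le
    exact div_nonneg (by linarith) (sq_nonneg _)

/-- The derivative of `arccos x ^ 2` is `-2 a / sin a` with `a = arccos x`, which increases
in `x` because `a / sin a` increases in `a`. -/
lemma convexOn_arccos_sq : ConvexOn ℝ (Icc (-1) 1) (fun x => arccos x ^ 2) := by
  have hderiv : ∀ x ∈ Ioo (-1 : ℝ) 1,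
      HasDerivAt (fun x => arccos x ^ 2) (-2 * (arccos x / sin (arccos x))) x := by
    intro x hx
    refine ((hasDerivAt_arccos hx.1.ne' hx.2.ne).fun_pow 2).congr_deriv ?_
    rw [sin_arccos]
    push_cast
    ring
  have harccos : ∀ x ∈ Ioo (-1 : ℝ) 1, arccos x ∈ Ioo 0 π :=
    fun x hx => ⟨arccos_pos.2 hx.2, arccos_lt_pi.2 hx.1⟩
  refine MonotoneOn.convexOn_of_deriv (convex_Icc _ _) (continuous_arccos.pow 2).continuousOn
    ?_ ?_ <;> rw [interior_Icc]
  · exact fun x hx => (hderiv x hx).differentiableAt.differentiableWithinAt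
  · intro x hx y hy hxy
    rw [(hderiv x hx).deriv, (hderiv y hy).deriv]
    have := monotoneOn_div_sin (harccos y hy) (harccos x hx) (arccos_le_arccos hxy)
    simp only at this
    linarith

/-- `π - θ` and `θ` have the same sine, so concavity of `sin` on `[0, π]` bounds it below
between them. -/
lemma sin_le_sin_of_mem_Icc_pi_sub {θ u : ℝ} (hθ : θ ≤ π) (hu : u ∈ Icc (π - θ) θ) :
    sin θ ≤ sin u := by
  have hle : π - θ ≤ θ := hu.1.trans hu.2
  have h := strictConcaveOn_sin_Icc.concaveOn.ge_on_segment
    (⟨by linarith, by linarith [pi_pos]⟩ : π - θ ∈ Icc 0 π) (⟨by linarith, hθ⟩ : θ ∈ Icc 0 π)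
    (by rwa [segment_eq_Icc hle])
  rwa [sin_pi_sub, min_self] at h

lemma mul_sin_le_cos_sub_cos {θ ψ : ℝ} (hθ : θ ≤ π) (hψ : ψ ∈ Icc (π - θ) θ) :
    (θ - ψ) * sin θ ≤ cos ψ - cos θ := by
  have h := (convex_Icc (π - θ) θ).image_sub_le_mul_sub_of_deriv_le continuous_cos.continuousOn
    differentiable_cos.differentiableOn (C := -sin θ) (fun u hu => by
      rw [interior_Icc] at hu
      rw [deriv_cos', neg_le_neg_iff]
      exact sin_le_sin_of_mem_Icc_pi_sub hθ (Ioo_subset_Icc_self hu))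
    ψ hψ θ ⟨hψ.1.trans hψ.2, le_rfl⟩ hψ.2
  linarith

lemma sq_sub_arccos_cos_mul_cos_sq_le {θ : ℝ} (hθ₀ : 0 ≤ θ) (hθ : θ ≤ π) (hcos : cos θ ≤ 0)
    (c : ℝ) : (θ ^ 2 - arccos (cos θ * cos c) ^ 2) * sin θ ≤ θ * (-cos θ) * c ^ 2 := by
  set ψ := arccos (cos θ * cos c)
  have hlow : cos θ ≤ cos θ * cos c := by nlinarith [cos_le_one c]
  have hup : cos θ * cos c ≤ -cos θ := by nlinarith [neg_one_le_cos c]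
  have hψ : ψ ∈ Icc (π - θ) θ := by
    constructor
    · calc π - θ = arccos (-cos θ) := by
            rw [← cos_pi_sub, arccos_cos (by linarith) (by linarith)]
        _ ≤ ψ := arccos_le_arccos hup
    · calc ψ ≤ arccos (cos θ) := arccos_le_arccos hlow
        _ = θ := arccos_cos hθ₀ hθ
  have hcosψ : cos ψ = cos θ * cos c :=
    cos_arccos (by linarith [neg_one_le_cos θ]) (by linarith [neg_one_le_cos θ])
  have hmvt := mul_sin_le_cos_sub_cos hθ hψ
  have hsin : 0 ≤ sin θ := sin_nonneg_of_nonneg_of_le_pi hθ₀ hθ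
  have hθψ : 0 ≤ θ - ψ := by linarith [hψ.2]
  calc (θ ^ 2 - ψ ^ 2) * sin θ = (θ + ψ) * ((θ - ψ) * sin θ) := by ring
    _ ≤ 2 * θ * ((θ - ψ) * sin θ) := by
        gcongr
        linarith [hψ.2]
    _ ≤ 2 * θ * (cos ψ - cos θ) := by gcongr
    _ = 2 * θ * (-cos θ) * (1 - cos c) := by rw [hcosψ]; ring
    _ ≤ 2 * θ * (-cos θ) * (c ^ 2 / 2) := by
        gcongr
        · nlinarith
        · linarith [one_sub_sq_div_two_le_cos (x := c)]
    _ = θ * (-cos θ) * c ^ 2 := by ring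

lemma one_sub_mul_sin_eq_of_mul_cot_eq {θ ε : ℝ} (hθ₀ : 0 < θ) (hθ : θ < π) (hε : ε ≠ 0)
    (hcot : θ * cot θ = -(1 - ε) / (2 * ε)) : (1 - ε) * sin θ = 2 * ε * θ * (-cos θ) := by
  have hsin : sin θ ≠ 0 := (sin_pos_of_pos_of_lt_pi hθ₀ hθ).ne'
  rw [cot_eq_cos_div_sin] at hcot
  field_simp at hcot
  linarith

lemma mul_sq_lt_mul_arccos_cos_mul_cos_sq_add {θ ε c : ℝ} (hθ₀ : 0 < θ) (hθ : θ < π)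
    (hε₀ : 0 < ε) (hε₁ : ε < 1) (hrel : (1 - ε) * sin θ = 2 * ε * θ * (-cos θ)) (hc : 0 < c) :
    ε * θ ^ 2 < ε * arccos (cos θ * cos c) ^ 2 + (1 - ε) * c ^ 2 := by
  have hsin : 0 < sin θ := sin_pos_of_pos_of_lt_pi hθ₀ hθ
  have hcos : cos θ < 0 := by nlinarith [mul_pos (sub_pos.2 hε₁) hsin, mul_pos hε₀ hθ₀]
  have key := sq_sub_arccos_cos_mul_cos_sq_le hθ₀.le hθ.le hcos.le c
  refine lt_of_mul_lt_mul_right ?_ hsin.le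
  nlinarith [mul_le_mul_of_nonneg_left key hε₀.le,
    mul_pos (mul_pos (sub_pos.2 hε₁) hsin) (pow_pos hc 2)]

end Real

section NormedSphere

variable {E : Type*} [NormedAddCommGroup E] {K : ℝ} {x y : E}

lemma mul_norm_mul_norm_eq_one (hK : 0 < K) (hx : ‖x‖ = 1 / √K) (hy : ‖y‖ = 1 / √K) :
    K * (‖x‖ * ‖y‖) = 1 := by
  rw [hx, hy, ← sq, div_pow, one_pow, sq_sqrt hK.le, mul_one_div_cancel hK.ne']

lemma mul_inner_mem_Icc [InnerProductSpace ℝ E] (hK : 0 < K) (hx : ‖x‖ = 1 / √K)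
    (hy : ‖y‖ = 1 / √K) :
    K * inner ℝ x y ∈ Icc (-1) 1 := by
  refine abs_le.1 ?_
  rw [abs_mul, abs_of_pos hK, ← mul_norm_mul_norm_eq_one hK hx hy]
  exact mul_le_mul_of_nonneg_left (abs_real_inner_le_norm x y) hK.le

lemma mul_inner_lt_one [InnerProductSpace ℝ E] (hK : 0 < K) (hx : ‖x‖ = 1 / √K)
    (hy : ‖y‖ = 1 / √K) (hxy : x ≠ y) :
    K * inner ℝ x y < 1 := by
  rw [← mul_norm_mul_norm_eq_one hK hx hy]
  refine mul_lt_mul_of_pos_left (inner_lt_norm_mul_iff_real.2 ?_) hK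
  rw [hx, hy]
  exact fun h => hxy (smul_right_injective _ (by positivity) h)

end NormedSphere

section Sphere

variable {K : ℝ} {μ V : EuclideanSpace ℝ (Fin 3)}

lemma sphereDist_sq (hK : 0 ≤ K) (x y : EuclideanSpace ℝ (Fin 3)) :
    sphereDist K x y ^ 2 = arccos (K * inner ℝ x y) ^ 2 / K := by
  rw [sphereDist, mul_pow, div_pow, one_pow, sq_sqrt hK]
  ring

lemma sphereDist_self {x : EuclideanSpace ℝ (Fin 3)} (hK : 0 < K) (hx : ‖x‖ = 1 / √K) :
    sphereDist K x x = 0 := by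
  rw [sphereDist, real_inner_self_eq_norm_mul_norm, mul_norm_mul_norm_eq_one hK hx hx,
    arccos_one, mul_zero]

lemma norm_sphereGeodesic (hK : 0 < K) (hμ : ‖μ‖ = 1 / √K) (hV : ‖V‖ = 1)
    (hperp : inner ℝ μ V = (0 : ℝ)) (t : ℝ) : ‖sphereGeodesic K μ V t‖ = 1 / √K := by
  have horth : inner ℝ (cos (t * √K) • μ) ((sin (t * √K) / √K) • V) = (0 : ℝ) := by
    rw [real_inner_smul_left, real_inner_smul_right, hperp, mul_zero, mul_zero]
  rw [← sq_eq_sq₀ (norm_nonneg _) (by positivity), sphereGeodesic, sq,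
    norm_add_sq_eq_norm_sq_add_norm_sq_real horth, norm_smul, norm_smul, hμ, hV,
    Real.norm_eq_abs, Real.norm_eq_abs]
  have hs : √K ≠ 0 := (sqrt_pos.2 hK).ne'
  field_simp
  rw [sq_abs, sq_abs, div_pow, mul_div_cancel₀ _ (pow_ne_zero 2 hs), cos_sq_add_sin_sq]

lemma inner_sphereGeodesic_add_inner_sphereGeodesic_neg (K : ℝ)
    (μ V q : EuclideanSpace ℝ (Fin 3)) (t : ℝ) :
    inner ℝ q (sphereGeodesic K μ V t) + inner ℝ q (sphereGeodesic K μ V (-t))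
      = 2 * cos (t * √K) * inner ℝ q μ := by
  simp only [sphereGeodesic, inner_add_right, real_inner_smul_right, neg_mul, cos_neg, sin_neg]
  ring

lemma sphereDist_sphereGeodesic (hK : 0 < K) (hμ : ‖μ‖ = 1 / √K)
    (hperp : inner ℝ μ V = (0 : ℝ)) {t : ℝ} (ht : |t| * √K ≤ π) :
    sphereDist K μ (sphereGeodesic K μ V t) = |t| := by
  have hs : 0 < √K := sqrt_pos.2 hK
  have hinner : K * inner ℝ μ (sphereGeodesic K μ V t) = cos (|t| * √K) := by
    rw [sphereGeodesic, inner_add_right, real_inner_smul_right, real_inner_smul_right, hperp,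
      real_inner_self_eq_norm_mul_norm, mul_zero, add_zero, mul_left_comm,
      mul_norm_mul_norm_eq_one hK hμ hμ, mul_one, ← cos_abs, abs_mul, abs_of_pos hs]
  rw [sphereDist, hinner, arccos_cos (by positivity) ht]
  field_simp

lemma arccos_sq_le_sphereDist_sq_add_sphereDist_sq (hK : 0 < K) (hμ : ‖μ‖ = 1 / √K)
    (hV : ‖V‖ = 1) (hperp : inner ℝ μ V = (0 : ℝ)) {q : EuclideanSpace ℝ (Fin 3)}
    (hq : ‖q‖ = 1 / √K) (t : ℝ) :
    2 * arccos (cos (t * √K) * (K * inner ℝ q μ)) ^ 2 / K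
      ≤ sphereDist K q (sphereGeodesic K μ V t) ^ 2
        + sphereDist K q (sphereGeodesic K μ V (-t)) ^ 2 := by
  have hmem : ∀ s, K * inner ℝ q (sphereGeodesic K μ V s) ∈ Icc (-1) 1 :=
    fun s => mul_inner_mem_Icc hK hq (norm_sphereGeodesic hK hμ hV hperp s)
  have hconv := convexOn_arccos_sq.2 (hmem t) (hmem (-t)) (by norm_num : (0 : ℝ) ≤ 1 / 2)
    (by norm_num : (0 : ℝ) ≤ 1 / 2) (by norm_num)
  have hmid : (1 / 2 : ℝ) • (K * inner ℝ q (sphereGeodesic K μ V t))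
      + (1 / 2 : ℝ) • (K * inner ℝ q (sphereGeodesic K μ V (-t)))
      = cos (t * √K) * (K * inner ℝ q μ) := by
    linear_combination (K / 2) * inner_sphereGeodesic_add_inner_sphereGeodesic_neg K μ V q t
  rw [hmid, smul_eq_mul, smul_eq_mul] at hconv
  rw [sphereDist_sq hK.le, sphereDist_sq hK.le, ← add_div]
  gcongr
  linarith

end Sphere

/-- on the sphere `S²_K` of curvature `K > 0`, for
`ζ = (1−ε)δ_μ + (ε/2)(δ_{γ(t)} + δ_{γ(−t)})` with `0 < ε < 1`,
`0 < t < π/√K` and `t√K·cot(t√K) = −(1−ε)/(2ε)`, the point `μ` is the unique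
minimizer of the Fréchet function
`F_ζ(q) = (ε/2)d_s²(q,γ(t)) + (ε/2)d_s²(q,γ(−t)) + (1−ε)d_s²(q,μ)`. -/
theorem sphere_mixture_unique_frechet_mean
    (K : ℝ) (hK : 0 < K)
    (μ V : EuclideanSpace ℝ (Fin 3))
    (hμ : ‖μ‖ = 1 / Real.sqrt K) (hV : ‖V‖ = 1) (hperp : inner ℝ μ V = (0 : ℝ))
    (ε t : ℝ) (hε0 : 0 < ε) (hε1 : ε < 1)
    (ht0 : 0 < t) (ht : t < π / Real.sqrt K)
    (hcot : t * Real.sqrt K * Real.cot (t * Real.sqrt K) = -(1 - ε) / (2 * ε))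
    (F : EuclideanSpace ℝ (Fin 3) → ℝ)
    (hF : ∀ q, F q =
      (ε / 2) * sphereDist K q (sphereGeodesic K μ V t) ^ 2
        + (ε / 2) * sphereDist K q (sphereGeodesic K μ V (-t)) ^ 2
        + (1 - ε) * sphereDist K q μ ^ 2) :
    ∀ q : EuclideanSpace ℝ (Fin 3), ‖q‖ = 1 / Real.sqrt K → q ≠ μ → F μ < F q := by
  intro q hq hqμ
  have hs : 0 < √K := sqrt_pos.2 hK
  set θ := t * √K
  have hθ₀ : 0 < θ := mul_pos ht0 hs
  have hθ : θ < π := (lt_div_iff₀ hs).1 ht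
  set c := arccos (K * inner ℝ q μ) with hc_def
  have hc : 0 < c := arccos_pos.2 (mul_inner_lt_one hK hq hμ hqμ)
  have hcosc : cos c = K * inner ℝ q μ :=
    cos_arccos (mul_inner_mem_Icc hK hq hμ).1 (mul_inner_mem_Icc hK hq hμ).2
  have hFμ : F μ = ε * θ ^ 2 / K := by
    have hdist : ∀ s, |s| = t → sphereDist K μ (sphereGeodesic K μ V s) = t := fun s hst =>
      hst ▸ sphereDist_sphereGeodesic hK hμ hperp (hst ▸ hθ.le)
    rw [hF, hdist t (abs_of_pos ht0), hdist (-t) (by rw [abs_neg, abs_of_pos ht0]),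
      sphereDist_self hK hμ, mul_pow, sq_sqrt hK.le]
    field_simp
    ring
  have hFq : (ε * arccos (cos θ * cos c) ^ 2 + (1 - ε) * c ^ 2) / K ≤ F q := by
    have hmid : 2 * arccos (cos θ * cos c) ^ 2 / K ≤ sphereDist K q (sphereGeodesic K μ V t) ^ 2
        + sphereDist K q (sphereGeodesic K μ V (-t)) ^ 2 := by
      rw [hcosc]
      exact arccos_sq_le_sphereDist_sq_add_sphereDist_sq hK hμ hV hperp hq t
    rw [hF, sphereDist_sq hK.le q μ, ← hc_def]
    have hsplit : (ε * arccos (cos θ * cos c) ^ 2 + (1 - ε) * c ^ 2) / K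
        = ε / 2 * (2 * arccos (cos θ * cos c) ^ 2 / K) + (1 - ε) * (c ^ 2 / K) := by ring
    linarith [mul_le_mul_of_nonneg_left hmid (half_pos hε0).le]
  calc F μ = ε * θ ^ 2 / K := hFμ
    _ < (ε * arccos (cos θ * cos c) ^ 2 + (1 - ε) * c ^ 2) / K := by
      gcongr
      exact mul_sq_lt_mul_arccos_cos_mul_cos_sq_add hθ₀ hθ hε0 hε1
        (one_sub_mul_sin_eq_of_mul_cot_eq hθ₀ hθ hε0.ne' hcot) hc
    _ ≤ F q := hFq

end
end
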